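/- arXiv:1102.2122 — 2 statements merged into one kernel-verified Lean document; each statement's English description precedes it below -/
import Mathlib

section
/- For every prime power q and every even m ≥ 2, the covering radius of the first-order generalized Reed–Muller code is exactly ρ(1,m) = (q-1)q^{m-1} − q^{m/2−1}. -/
/-- The covering radius of the first-order generalized Reed–Muller code `R_q(1,m)`. -/
noncomputable def rmCoveringRadius (F : Type) [Field F] [Fintype F] [DecidableEq F]
    (m : ℕ) : ℕ :=
  Finset.univ.sup fun f : (Fin m → F) → F =>
    sInf {d : ℕ | ∃ a : Fin m → F, ∃ b : F,
      d = hammingDist f (fun x => (∑ i, a i * x i) + b)}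

/-!
Write `N(a, b)` for the number of points where `f` agrees with `x ↦ a ⬝ᵥ x + b`, so that the
distance between them is `q^m - N(a, b)`, and put `Q = q^(m/2)`.

Every `f` is close to some affine function: counting triples `(a, x, y)` with
`f x - a ⬝ᵥ x = f y - a ⬝ᵥ y` shows that some `a` has `q ∑_b N(a,b)² - q^(2m) ≥ (q - 1) q^m`,
and since `∑_b N(a,b) = q^m` the inequality `∑ e_b² ≤ (∑ e_b)²` for `e_b = max N(a,·) - N(a,b)`
turns this into `q · max_b N(a,b) ≥ q^m + Q`.

Conversely, identify `F^m` with `L = 𝔽_{q^m}` and let `K ⊆ L` be the subfield with `Q`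
elements. Affine functions are `z ↦ Tr_{L/F}(ρ z) + b`, and `Tr_{L/F} = Tr_{K/F} ∘ Tr_{L/K}`,
so `f = Tr_{K/F} ∘ N_{L/K}` agrees with one of them exactly where
`Tr_{K/F}(z^(Q+1) - ρ z - (ρ z)^Q) = b`. Both `w ↦ ∑_{i < m/2} w^(q^i)`, which is `Tr_{K/F}`,
and `z ↦ z^(Q+1) - ρ z - (ρ z)^Q` are polynomial maps, of degrees `Q / q` and `Q + 1`, so there
are at most `(Q + 1) Q / q` such `z`.
-/

open Finset Matrix Polynomial FiniteField

lemma card_mul_sum_sq_sub_sq_sum_le {β : Type*} [Fintype β] (n : β → ℤ) {M : ℤ}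
    (hM : ∀ b, n b ≤ M) :
    Fintype.card β * ∑ b, n b ^ 2 - (∑ b, n b) ^ 2 ≤
      (Fintype.card β - 1) * (Fintype.card β * M - ∑ b, n b) ^ 2 := by
  have he : ∑ b, (M - n b) ^ 2 ≤ (∑ b, (M - n b)) ^ 2 :=
    sum_sq_le_sq_sum_of_nonneg fun b _ => sub_nonneg.mpr (hM b)
  have hsum : ∑ b, (M - n b) = Fintype.card β * M - ∑ b, n b := by
    simp [sum_sub_distrib]
  have hsq : ∑ b, (M - n b) ^ 2 = Fintype.card β * M ^ 2 - 2 * M * ∑ b, n b + ∑ b, n b ^ 2 := by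
    simp only [sub_sq, sum_add_distrib, sum_sub_distrib, ← mul_sum, sum_const, card_univ,
      nsmul_eq_mul]
  rw [hsum, hsq] at he
  nlinarith [mul_le_mul_of_nonneg_left he (Nat.cast_nonneg' (Fintype.card β))]

lemma sum_card_fiber_sq {X β : Type*} [Fintype X] [Fintype β] [DecidableEq β] (g : X → β) :
    ∑ b, #{x | g x = b} ^ 2 = ∑ x, #{y | g y = g x} := by
  rw [← sum_fiberwise univ g]
  refine sum_congr rfl fun b _ => ?_
  rw [sum_congr rfl fun x hx => by rw [(mem_filter.mp hx).2], sum_const, smul_eq_mul, sq]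

section AffineAgreement

variable {F ι : Type*} [Field F] [Fintype F] [DecidableEq F] [Fintype ι] [DecidableEq ι]

local notation "q" => Fintype.card F

lemma card_mul_card_dotProduct_eq {v : ι → F} (hv : v ≠ 0) (c : F) :
    q * #{a : ι → F | a ⬝ᵥ v = c} = q ^ Fintype.card ι := by
  obtain ⟨i, hi⟩ := Function.ne_iff.mp hv
  have hfiber : ∀ c, #{a : ι → F | a ⬝ᵥ v = c} = #{a : ι → F | a ⬝ᵥ v = 0} := fun c =>
    (card_equiv (Equiv.addRight (Pi.single i (c / v i))) fun a => by
      simp [add_dotProduct, single_dotProduct, div_mul_cancel₀ _ hi]).symm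
  have hcard := card_eq_sum_card_fiberwise (s := univ) (t := univ) fun a _ => mem_univ (a ⬝ᵥ v)
  simp only [card_univ, Fintype.card_fun, hfiber, sum_const, smul_eq_mul] at hcard
  rw [hfiber, hcard]

lemma card_mul_card_sub_dotProduct_eq_sub_dotProduct (f : (ι → F) → F) (x y : ι → F) :
    (q : ℤ) * #{a : ι → F | f y - a ⬝ᵥ y = f x - a ⬝ᵥ x} =
      if y = x then q ^ (Fintype.card ι + 1) else q ^ Fintype.card ι := by
  split_ifs with h
  · simp [h, pow_succ, mul_comm]
  · rw [filter_congr fun a _ => show f y - a ⬝ᵥ y = f x - a ⬝ᵥ x ↔ a ⬝ᵥ (x - y) = f x - f y by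
      rw [dotProduct_sub]; constructor <;> intro h <;> linear_combination h]
    exact_mod_cast card_mul_card_dotProduct_eq (sub_ne_zero.mpr (Ne.symm h)) _

lemma card_mul_sum_sum_sq_card_sub_dotProduct_eq (f : (ι → F) → F) :
    (q : ℤ) * ∑ a : ι → F, ∑ b, (#{x | f x - a ⬝ᵥ x = b} : ℤ) ^ 2 =
      q ^ Fintype.card ι * q ^ Fintype.card ι * (q ^ Fintype.card ι + q - 1) := by
  calc (q : ℤ) * ∑ a : ι → F, ∑ b, (#{x | f x - a ⬝ᵥ x = b} : ℤ) ^ 2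
      = q * ∑ a : ι → F, ∑ x, (#{y | f y - a ⬝ᵥ y = f x - a ⬝ᵥ x} : ℤ) := by
        simp only [← Nat.cast_pow, ← Nat.cast_sum, sum_card_fiber_sq]
    _ = ∑ x : ι → F, ∑ y : ι → F, (q : ℤ) * #{a : ι → F | f y - a ⬝ᵥ y = f x - a ⬝ᵥ x} := by
        rw [sum_comm, mul_sum]
        refine sum_congr rfl fun x _ => ?_
        rw [← mul_sum]
        exact_mod_cast congrArg _ (sum_card_bipartiteAbove_eq_sum_card_bipartiteBelow
          (s := univ) (t := univ) (fun a y => f y - a ⬝ᵥ y = f x - a ⬝ᵥ x))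
    _ = _ := by
        simp only [card_mul_card_sub_dotProduct_eq_sub_dotProduct, sum_ite, filter_eq', filter_ne',
          mem_univ, ↓reduceIte, sum_const, card_singleton, card_erase_of_mem, card_univ,
          Fintype.card_pi, prod_const, Nat.cast_ite, Nat.cast_pow, Int.nsmul_eq_mul, Nat.cast_one,
          one_mul]
        push_cast [Nat.one_le_pow _ _ Fintype.card_pos]
        ring

lemma exists_pow_card_le_sq_card_sub_dotProduct_eq (f : (ι → F) → F) :
    ∃ a b, (q : ℤ) ^ Fintype.card ι ≤ q * #{x | f x - a ⬝ᵥ x = b} ∧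
      (q : ℤ) ^ Fintype.card ι ≤ (q * #{x | f x - a ⬝ᵥ x = b} - q ^ Fintype.card ι) ^ 2 := by
  have hsum : ∀ a : ι → F, ∑ b, (#{x | f x - a ⬝ᵥ x = b} : ℤ) = q ^ Fintype.card ι := fun a => by
    rw [← Nat.cast_sum, ← card_eq_sum_card_fiberwise fun x _ => mem_univ _]
    simp
  obtain ⟨a, -, ha⟩ : ∃ a ∈ (univ : Finset (ι → F)), ((q : ℤ) - 1) * q ^ Fintype.card ι ≤
      q * ∑ b, (#{x | f x - a ⬝ᵥ x = b} : ℤ) ^ 2 - q ^ Fintype.card ι * q ^ Fintype.card ι := by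
    refine exists_le_of_sum_le univ_nonempty (le_of_eq ?_)
    rw [sum_sub_distrib, ← mul_sum _ _ (q : ℤ), card_mul_sum_sum_sq_card_sub_dotProduct_eq]
    simp only [sum_const, card_univ, Fintype.card_pi, prod_const, Int.nsmul_eq_mul, Nat.cast_pow]
    ring
  obtain ⟨b, -, hb⟩ := exists_max_image univ (fun b => #{x | f x - a ⬝ᵥ x = b}) univ_nonempty
  have hvar := card_mul_sum_sq_sub_sq_sum_le (fun b => (#{x | f x - a ⬝ᵥ x = b} : ℤ))
    fun b' => (by exact_mod_cast hb b' (mem_univ _) :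
      (#{x | f x - a ⬝ᵥ x = b'} : ℤ) ≤ #{x | f x - a ⬝ᵥ x = b})
  rw [hsum] at hvar
  refine ⟨a, b, ?_, ?_⟩
  · calc (q : ℤ) ^ Fintype.card ι = ∑ b', (#{x | f x - a ⬝ᵥ x = b'} : ℤ) := (hsum a).symm
      _ ≤ ∑ _b' : F, (#{x | f x - a ⬝ᵥ x = b} : ℤ) :=
        sum_le_sum fun b' _ => by exact_mod_cast hb b' (mem_univ _)
      _ = q * #{x | f x - a ⬝ᵥ x = b} := by simp
  · have hq : (0 : ℤ) < q - 1 := by have := Fintype.one_lt_card (α := F); omega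
    exact le_of_mul_le_mul_left (by linarith) hq

lemma exists_card_sub_dotProduct_eq_ge {k : ℕ} (hk : 1 ≤ k)
    (hι : Fintype.card ι = k + k) (f : (ι → F) → F) :
    ∃ a b, q ^ (k + k - 1) + q ^ (k - 1) ≤ #{x | f x - a ⬝ᵥ x = b} := by
  obtain ⟨a, b, hpos, hsq⟩ := exists_pow_card_le_sq_card_sub_dotProduct_eq f
  refine ⟨a, b, ?_⟩
  rw [hι] at hpos hsq
  have hroot : (q : ℤ) ^ k ≤ q * #{x | f x - a ⬝ᵥ x = b} - q ^ (k + k) :=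
    (pow_le_pow_iff_left₀ (by positivity) (sub_nonneg.mpr hpos) two_ne_zero).mp
      (by rwa [← pow_mul, mul_two])
  have hmul : (q : ℤ) * (q ^ (k + k - 1) + q ^ (k - 1)) = q ^ (k + k) + q ^ k := by
    rw [mul_add, ← pow_succ', ← pow_succ', Nat.sub_add_cancel (by omega),
      Nat.sub_add_cancel hk]
  have : ((q ^ (k + k - 1) + q ^ (k - 1) : ℕ) : ℤ) ≤ #{x | f x - a ⬝ᵥ x = b} := by
    push_cast
    exact le_of_mul_le_mul_left (a := (q : ℤ)) (by linarith) (by positivity)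
  exact_mod_cast this

lemma hammingDist_add_card_sub_dotProduct_eq (f : (ι → F) → F) (a : ι → F) (b : F) :
    hammingDist f (fun x => a ⬝ᵥ x + b) + #{x | f x - a ⬝ᵥ x = b} = q ^ Fintype.card ι := by
  simp only [hammingDist, sub_eq_iff_eq_add']
  rw [add_comm, card_filter_add_card_filter_not]
  simp

end AffineAgreement

lemma card_filter_eval_X_pow_add_eq_le {K : Type*} [Field K] [Fintype K] [DecidableEq K]
    {n : ℕ} (hn : 0 < n) {r : K[X]} (hr : r.degree < n) (c : K) :
    #{z | (X ^ n + r).eval z = c} ≤ n := by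
  have hlt : (r - C c).degree < n :=
    (degree_sub_le _ _).trans_lt (max_lt hr (degree_C_le.trans_lt (by exact_mod_cast hn)))
  have hmonic : (X ^ n + (r - C c)).Monic := monic_X_pow_add hlt
  have hdeg : (X ^ n + (r - C c)).natDegree = n := by
    rw [natDegree_add_eq_left_of_degree_lt (by rwa [degree_X_pow]), natDegree_X_pow]
  refine (card_le_degree_of_subset_roots fun z hz => ?_).trans hdeg.le
  rw [mem_roots hmonic.ne_zero, IsRoot.def]
  simp only [Finset.mem_val, mem_filter, mem_univ, true_and] at hz
  rw [← add_sub_assoc, eval_sub, eval_C, hz, sub_self]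

section NormTrace

variable (F L : Type*) [Field F] [Fintype F] [Field L] [Algebra F L]

local notation "q" => Fintype.card F

/-- On the subfield of `L` with `q ^ k` elements, this is the trace down to `F`. -/
def partialTrace (k : ℕ) : L →ₗ[F] L :=
  ∑ i ∈ range k, ((frobeniusAlgHom F L) ^ i).toLinearMap

variable {F L}

lemma partialTrace_apply (k : ℕ) (w : L) : partialTrace F L k w = ∑ i ∈ range k, w ^ q ^ i := by
  simp [partialTrace, LinearMap.coe_sum, AlgHom.coe_pow, coe_frobeniusAlgHom, pow_iterate]

lemma partialTrace_pow_card_add (k : ℕ) (u : L) :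
    partialTrace F L k u ^ q + u = partialTrace F L k u + u ^ q ^ k := by
  have hfrob : partialTrace F L k u ^ q = ∑ i ∈ range k, u ^ q ^ (i + 1) := by
    rw [← frobeniusAlgHom_apply F L, partialTrace_apply, map_sum]
    simp [← pow_mul, ← pow_succ]
  have := sum_range_succ' (fun i => u ^ q ^ i) k
  rw [sum_range_succ] at this
  rw [hfrob, partialTrace_apply]
  simp only [pow_zero, pow_one] at this
  linear_combination -this

variable [Fintype L]

lemma card_partialTrace_eq_le [DecidableEq L] {k : ℕ} (hk : 1 ≤ k) (c : L) :
    #{w | partialTrace F L k w = c} ≤ q ^ (k - 1) := by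
  obtain ⟨j, rfl⟩ : ∃ j, k = j + 1 := ⟨k - 1, by omega⟩
  rw [Nat.add_sub_cancel]
  have hq : 1 < q := Fintype.one_lt_card
  have hr : (∑ i ∈ range j, (X : L[X]) ^ q ^ i).degree < (q ^ j : ℕ) := by
    refine (degree_sum_le _ _).trans_lt ((Finset.sup_lt_iff (WithBot.bot_lt_coe _)).mpr
      fun i hi => ?_)
    rw [degree_X_pow]
    exact_mod_cast Nat.pow_lt_pow_right hq (mem_range.mp hi)
  convert card_filter_eval_X_pow_add_eq_le (by positivity) hr c using 3 with w
  simp [partialTrace_apply, sum_range_succ, eval_finsetSum, add_comm]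

lemma algebraMap_trace_eq_partialTrace {k : ℕ} (h : Module.finrank F L = k + k) (w : L) :
    algebraMap F L (Algebra.trace F L w) = partialTrace F L k (w + w ^ q ^ k) := by
  rw [algebraMap_trace_eq_sum_pow, h, sum_range_add, map_add, partialTrace_apply,
    partialTrace_apply, Nat.card_eq_fintype_card]
  simp [pow_add, pow_mul]

lemma pow_card_pow_pow_card_pow {k : ℕ} (h : Module.finrank F L = k + k) (z : L) :
    (z ^ q ^ k) ^ q ^ k = z := by
  rw [← pow_mul, ← pow_add, ← h, ← Module.card_eq_pow_finrank, FiniteField.pow_card]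

lemma mem_range_algebraMap_of_pow_card_eq {u : L} (hu : u ^ q = u) :
    u ∈ Set.range (algebraMap F L) := by
  rw [IsGalois.mem_range_algebraMap_iff_fixed]
  intro g
  obtain ⟨⟨n, -⟩, rfl⟩ := (bijective_frobeniusAlgEquivOfAlgebraic_pow F L).2 g
  rw [AlgEquiv.coe_pow, coe_frobeniusAlgEquivOfAlgebraic]
  exact Function.iterate_fixed hu n

lemma exists_trace_mul_eq (φ : L →ₗ[F] F) : ∃ ρ : L, ∀ z, φ z = Algebra.trace F L (ρ * z) :=
  ⟨((Algebra.traceForm F L).toDual (traceForm_nondegenerate F L)).symm φ, fun z => by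
    rw [← Algebra.traceForm_apply, ← LinearMap.BilinForm.toDual_def (traceForm_nondegenerate F L),
      LinearEquiv.apply_symm_apply]⟩

variable (F L) in
/-- `Tr_{K/F} ∘ N_{L/K}`, where `[L : F] = 2k` and `K` is the subfield with `q ^ k` elements;
`invFun` brings the value, which lies in the image of `F`, back to `F`. -/
noncomputable def normTrace (k : ℕ) (z : L) : F :=
  Function.invFun (algebraMap F L) (partialTrace F L k (z ^ (q ^ k + 1)))

lemma algebraMap_normTrace {k : ℕ} (h : Module.finrank F L = k + k) (z : L) :
    algebraMap F L (normTrace F L k z) = partialTrace F L k (z ^ (q ^ k + 1)) := by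
  refine Function.invFun_eq (mem_range_algebraMap_of_pow_card_eq ?_)
  have hfix : (z ^ (q ^ k + 1)) ^ q ^ k = z ^ (q ^ k + 1) := by
    rw [← pow_mul, add_mul, one_mul, pow_add, pow_mul, pow_card_pow_pow_card_pow h, pow_succ,
      mul_comm]
  have := partialTrace_pow_card_add (F := F) k (z ^ (q ^ k + 1))
  rw [hfix] at this
  exact add_right_cancel this

lemma card_normTrace_sub_eq_le [DecidableEq F] [DecidableEq L] {k : ℕ} (hk : 1 ≤ k)
    (h : Module.finrank F L = k + k) (φ : L →ₗ[F] F) (b : F) :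
    #{z | normTrace F L k z - φ z = b} ≤ q ^ (k + k - 1) + q ^ (k - 1) := by
  obtain ⟨ρ, hρ⟩ := exists_trace_mul_eq φ
  let H : L → L := fun z => z ^ (q ^ k + 1) - (ρ * z + (ρ * z) ^ q ^ k)
  have hiff : ∀ z, normTrace F L k z - φ z = b ↔
      partialTrace F L k (H z) = algebraMap F L b := fun z => by
    rw [← (algebraMap F L).injective.eq_iff, map_sub, algebraMap_normTrace h, hρ,
      algebraMap_trace_eq_partialTrace h, ← map_sub]
  have hH : ∀ w, #{z | H z = w} ≤ q ^ k + 1 := fun w => by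
    have hr : (-(C ρ * X + C (ρ ^ q ^ k) * X ^ q ^ k) : L[X]).degree < (q ^ k + 1 : ℕ) := by
      refine (degree_le_of_natDegree_le (n := q ^ k) ?_).trans_lt
        (by exact_mod_cast Nat.lt_succ_self _)
      compute_degree!
      exact Nat.one_le_pow _ _ Fintype.card_pos
    convert card_filter_eval_X_pow_add_eq_le (Nat.succ_pos _) hr w using 3 with z
    simp [H, mul_pow, sub_eq_add_neg]
  calc #{z | normTrace F L k z - φ z = b}
      = #{z | partialTrace F L k (H z) = algebraMap F L b} := by simp_rw [hiff]
    _ ≤ (q ^ k + 1) * #{w | partialTrace F L k w = algebraMap F L b} :=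
        card_le_mul_card_image_of_maps_to (f := H) (fun z hz => by simpa using hz) _ fun w _ =>
          (card_le_card (filter_subset_filter _ (subset_univ _))).trans (hH w)
    _ ≤ (q ^ k + 1) * q ^ (k - 1) := Nat.mul_le_mul_left _ (card_partialTrace_eq_le hk _)
    _ = q ^ (k + k - 1) + q ^ (k - 1) := by
        rw [add_mul, one_mul, ← pow_add]
        congr 2
        omega

lemma exists_forall_card_sub_dotProduct_eq_le {ι : Type*} [Fintype ι] [DecidableEq ι]
    [DecidableEq F] {k : ℕ} (hk : 1 ≤ k) (hι : Fintype.card ι = k + k) :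
    ∃ f : (ι → F) → F, ∀ a b, #{x | f x - a ⬝ᵥ x = b} ≤ q ^ (k + k - 1) + q ^ (k - 1) := by
  have : Fact (ringChar F).Prime := ⟨CharP.char_is_prime F _⟩
  have : NeZero (k + k) := ⟨by omega⟩
  let L := Extension F (ringChar F) (k + k)
  let : Fintype L := Fintype.ofFinite L
  classical
  have h : Module.finrank F L = k + k := finrank_extension F (ringChar F) (k + k)
  let B := (Module.finBasisOfFinrankEq F L h).reindex (Fintype.equivFinOfCardEq hι).symm
  refine ⟨fun x => normTrace F L k (B.equivFun.symm x), fun a b => ?_⟩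
  calc #{x | normTrace F L k (B.equivFun.symm x) - a ⬝ᵥ x = b}
      = #{z | normTrace F L k z - (dotProductEquiv F ι a ∘ₗ B.equivFun.toLinearMap) z = b} :=
        card_equiv B.equivFun.symm.toEquiv fun x => by
          simp [-Module.Basis.equivFun_symm_apply, -Module.Basis.equivFun_apply]
    _ ≤ _ := card_normTrace_sub_eq_le hk h _ b

end NormTrace

/-- for `m` even, `m ≥ 2`, `ρ(1,m) = (q-1)q^{m-1} - q^{m/2-1}`. -/
theorem rmCoveringRadius_eq_of_even
    {F : Type} [Field F] [Fintype F] [DecidableEq F] {m : ℕ}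
    (hm : 2 ≤ m) (hme : Even m) :
    rmCoveringRadius F m =
      (Fintype.card F - 1) * Fintype.card F ^ (m - 1) - Fintype.card F ^ (m / 2 - 1) := by
  obtain ⟨k, rfl⟩ := hme
  have hk : 1 ≤ k := by omega
  have hι : Fintype.card (Fin (k + k)) = k + k := Fintype.card_fin _
  have hdist (f : (Fin (k + k) → F) → F) (a b) : hammingDist f (fun x => a ⬝ᵥ x + b) +
      #{x | f x - a ⬝ᵥ x = b} = Fintype.card F ^ (k + k) :=
    (hammingDist_add_card_sub_dotProduct_eq f a b).trans (by rw [hι])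
  have hpow : (Fintype.card F - 1) * Fintype.card F ^ (k + k - 1) + Fintype.card F ^ (k + k - 1) =
      Fintype.card F ^ (k + k) := by
    rw [← Nat.succ_mul, Nat.succ_eq_add_one, Nat.sub_add_cancel Fintype.card_pos, ← pow_succ',
      Nat.sub_add_cancel (by omega)]
  rw [show (k + k) / 2 = k by omega, rmCoveringRadius]
  apply le_antisymm
  · refine Finset.sup_le fun f _ => ?_
    obtain ⟨a, b, hab⟩ := exists_card_sub_dotProduct_eq_ge hk hι f
    refine le_trans (Nat.sInf_le ⟨a, b, rfl⟩) (?_ : hammingDist f (fun x => a ⬝ᵥ x + b) ≤ _)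
    have := hdist f a b
    omega
  · obtain ⟨f, hf⟩ := exists_forall_card_sub_dotProduct_eq_le (F := F) hk hι
    refine le_trans (le_csInf ?_ ?_) (Finset.le_sup (f := fun f => sInf _) (mem_univ f))
    · exact ⟨_, 0, 0, rfl⟩
    rintro _ ⟨a, b, rfl⟩
    change _ ≤ hammingDist f (fun x => a ⬝ᵥ x + b)
    have := hdist f a b
    have := hf a b
    omega
end

section
/- Let q be a prime power, m ≥ 1, and let q_0(x) = x_1x_2 + ... + x_{r-1}x_r be a hyperbolic quadratic form of even rank r ≤ m on F_q^m. Then d(q_0, R_q(1,m)) = (q-1)q^{m-1} + q^{m−r/2−1} − q^{m−r/2}. -/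
/-!
Split the coordinates of `F^m` as `(z, u, v)`, where `u` and `v` are the even and odd
coordinates of the `s` hyperbolic pairs and `z` the remaining `m - 2s` ones, so that
`q₀ = u ⬝ᵥ v`. Completing the product, `u ⬝ᵥ v = c ⬝ᵥ z + a ⬝ᵥ u + b ⬝ᵥ v + β` becomes
`(u - b) ⬝ᵥ (v - a) = c ⬝ᵥ z + β + b ⬝ᵥ a`. Since a nonzero linear functional has
equidistributed fibres, the number of pairs with `u ⬝ᵥ v = t` is largest for `t = 0`, so the
zero function agrees with `q₀` most often, namely on `q^(m-2s) ((q^s - 1) q^(s-1) + q^s)`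
points.
-/

open Finset Function

theorem AddMonoidHom.card_fiber_mul_card_eq_of_surjective {G H : Type*} [AddGroup G] [AddGroup H]
    [Fintype G] [Fintype H] [DecidableEq H] (f : G →+ H) (hf : Surjective f) (t : H) :
    #{g | f g = t} * Fintype.card H = Fintype.card G := by
  have fiber_eq (h : H) : #{g | f g = h} = #{g | f g = t} := by
    obtain ⟨g₀, rfl⟩ := hf h
    obtain ⟨g₁, rfl⟩ := hf t
    refine card_equiv (Equiv.addLeft (g₁ - g₀)) fun g => ?_
    simp only [mem_filter_univ, Equiv.coe_addLeft, map_add, map_sub]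
    nth_rw 2 [← sub_add_cancel (f g₁) (f g₀)]
    exact add_left_cancel_iff.symm
  calc #{g | f g = t} * Fintype.card H = ∑ h : H, #{g | f g = h} := by
        rw [sum_congr rfl fun h _ => fiber_eq h, sum_const, card_univ, smul_eq_mul, mul_comm]
    _ = Fintype.card G := (card_eq_sum_card_fiberwise (s := univ) (by simp)).symm

theorem hammingDist_eq_card_sub_card_eq {ι β : Type*} [Fintype ι] [DecidableEq β] (f g : ι → β) :
    hammingDist f g = Fintype.card ι - #{i | f i = g i} := by
  rw [hammingDist, ← card_univ, ← card_filter_add_card_filter_not (s := univ) (fun i => f i = g i),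
    Nat.add_sub_cancel_left]

section DotProduct

variable {F ι κ : Type*} [Field F] [Fintype F] [DecidableEq F] [Fintype ι] [DecidableEq ι]
  [Fintype κ] [DecidableEq κ]

local notation "q" => Fintype.card F

theorem card_dotProduct_eq_of_ne_zero {u : ι → F} (hu : u ≠ 0) (t : F) :
    #{v | u ⬝ᵥ v = t} = q ^ (Fintype.card ι - 1) := by
  obtain ⟨j, hj⟩ := Function.ne_iff.mp hu
  have hsurj : Surjective (dotProductBilin F F u) := fun c =>
    ⟨Pi.single j (c / u j), by simp [dotProduct_single, mul_div_cancel₀ _ hj]⟩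
  have key := (dotProductBilin F F u).toAddMonoidHom.card_fiber_mul_card_eq_of_surjective hsurj t
  obtain ⟨n, hn⟩ : ∃ n, Fintype.card ι = n + 1 :=
    Nat.exists_eq_add_one.mpr (Fintype.card_pos_iff.mpr ⟨j⟩)
  rw [Fintype.card_fun, hn, pow_succ] at key
  rw [hn, Nat.add_sub_cancel]
  exact Nat.eq_of_mul_eq_mul_right Fintype.card_pos key

theorem card_pairs_dotProduct_eq (t : F) :
    #{p : (ι → F) × (ι → F) | p.1 ⬝ᵥ p.2 = t}
      = (q ^ Fintype.card ι - 1) * q ^ (Fintype.card ι - 1)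
        + if t = 0 then q ^ Fintype.card ι else 0 := by
  have fiberwise :
      #{p : (ι → F) × (ι → F) | p.1 ⬝ᵥ p.2 = t} = ∑ u : ι → F, #{v | u ⬝ᵥ v = t} := by
    simp only [card_filter, Fintype.sum_prod_type]
  have zero_fiber : #{v : ι → F | 0 ⬝ᵥ v = t} = if t = 0 then q ^ Fintype.card ι else 0 := by
    split_ifs with ht <;> simp [ht, eq_comm]
  rw [fiberwise, Fintype.sum_eq_add_sum_compl 0, zero_fiber, add_comm,
    sum_congr rfl fun u hu => card_dotProduct_eq_of_ne_zero (by simpa using hu) t, sum_const,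
    card_compl, card_singleton, Fintype.card_fun, smul_eq_mul]

theorem card_pairs_dotProduct_eq_le (t : F) :
    #{p : (ι → F) × (ι → F) | p.1 ⬝ᵥ p.2 = t} ≤ #{p : (ι → F) × (ι → F) | p.1 ⬝ᵥ p.2 = 0} := by
  rw [card_pairs_dotProduct_eq, card_pairs_dotProduct_eq, if_pos rfl]
  gcongr
  split_ifs <;> simp

theorem card_pairs_dotProduct_eq_affine (a b : ι → F) (r : F) :
    #{p : (ι → F) × (ι → F) | p.1 ⬝ᵥ p.2 = r + (a ⬝ᵥ p.1 + b ⬝ᵥ p.2)}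
      = #{p : (ι → F) × (ι → F) | p.1 ⬝ᵥ p.2 = r + b ⬝ᵥ a} := by
  refine card_equiv (Equiv.subRight (b, a)) fun p => ?_
  simp only [mem_filter_univ, Equiv.subRight_apply, Prod.fst_sub, Prod.snd_sub, sub_dotProduct,
    dotProduct_sub, dotProduct_comm p.1 a]
  constructor <;> intro h <;> linear_combination h

theorem card_dotProduct_snd_eq_affine_le (c : κ → F) (a b : ι → F) (β : F) :
    #{w : (κ → F) × (ι → F) × (ι → F) |
        w.2.1 ⬝ᵥ w.2.2 = c ⬝ᵥ w.1 + (a ⬝ᵥ w.2.1 + b ⬝ᵥ w.2.2) + β}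
      ≤ q ^ Fintype.card κ * #{p : (ι → F) × (ι → F) | p.1 ⬝ᵥ p.2 = 0} := by
  calc #{w : (κ → F) × (ι → F) × (ι → F) |
          w.2.1 ⬝ᵥ w.2.2 = c ⬝ᵥ w.1 + (a ⬝ᵥ w.2.1 + b ⬝ᵥ w.2.2) + β}
      = ∑ z : κ → F, #{p : (ι → F) × (ι → F) |
          p.1 ⬝ᵥ p.2 = (c ⬝ᵥ z + β) + (a ⬝ᵥ p.1 + b ⬝ᵥ p.2)} := by
        simp only [card_filter, Fintype.sum_prod_type (f := fun w : (κ → F) × _ => ite _ _ _),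
          add_right_comm _ _ β]
    _ = ∑ z : κ → F, #{p : (ι → F) × (ι → F) | p.1 ⬝ᵥ p.2 = c ⬝ᵥ z + β + b ⬝ᵥ a} := by
        simp only [card_pairs_dotProduct_eq_affine]
    _ ≤ ∑ _z : κ → F, #{p : (ι → F) × (ι → F) | p.1 ⬝ᵥ p.2 = 0} :=
        sum_le_sum fun _ _ => card_pairs_dotProduct_eq_le _
    _ = q ^ Fintype.card κ * #{p : (ι → F) × (ι → F) | p.1 ⬝ᵥ p.2 = 0} := by
        rw [sum_const, card_univ, Fintype.card_fun, smul_eq_mul]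

theorem card_dotProduct_snd_eq_zero :
    #{w : (κ → F) × (ι → F) × (ι → F) | w.2.1 ⬝ᵥ w.2.2 = 0}
      = q ^ Fintype.card κ * #{p : (ι → F) × (ι → F) | p.1 ⬝ᵥ p.2 = 0} := by
  rw [← Fintype.card_fun, ← card_univ, ← card_product]
  exact card_equiv (Equiv.refl _) fun w => by simp

end DotProduct

section HyperbolicCoords

variable {m s : ℕ}

def hyperbolicIndex (hn : 2 * s ≤ m) : Fin (m - 2 * s) ⊕ Fin s ⊕ Fin s → Fin m
  | .inl j => ⟨2 * s + j, by omega⟩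
  | .inr (.inl i) => ⟨2 * i, by omega⟩
  | .inr (.inr i) => ⟨2 * i + 1, by omega⟩

theorem hyperbolicIndex_bijective (hn : 2 * s ≤ m) : Bijective (hyperbolicIndex hn) := by
  refine (Fintype.bijective_iff_injective_and_card _).mpr ⟨?_, by simp; omega⟩
  rintro (j | i | i) (j' | i' | i') h <;> simp [hyperbolicIndex, Fin.ext_iff] at h ⊢ <;> omega

noncomputable def hyperbolicCoords (R : Type*) (hn : 2 * s ≤ m) :
    (Fin m → R) ≃ (Fin (m - 2 * s) → R) × (Fin s → R) × (Fin s → R) :=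
  ((Equiv.ofBijective _ (hyperbolicIndex_bijective hn)).arrowCongr (Equiv.refl R)).symm.trans
    ((Equiv.sumArrowEquivProdArrow _ _ _).trans
      ((Equiv.refl _).prodCongr (Equiv.sumArrowEquivProdArrow _ _ _)))

theorem hyperbolicCoords_apply {R : Type*} (hn : 2 * s ≤ m) (x : Fin m → R) :
    hyperbolicCoords R hn x =
      (fun j : Fin (m - 2 * s) => x ⟨2 * s + j, by omega⟩, fun i : Fin s => x ⟨2 * i, by omega⟩,
        fun i : Fin s => x ⟨2 * i + 1, by omega⟩) :=
  rfl

theorem dotProduct_eq_hyperbolicCoords {R : Type*} [NonUnitalNonAssocSemiring R] (hn : 2 * s ≤ m)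
    (α x : Fin m → R) :
    α ⬝ᵥ x = (hyperbolicCoords R hn α).1 ⬝ᵥ (hyperbolicCoords R hn x).1
      + ((hyperbolicCoords R hn α).2.1 ⬝ᵥ (hyperbolicCoords R hn x).2.1
        + (hyperbolicCoords R hn α).2.2 ⬝ᵥ (hyperbolicCoords R hn x).2.2) := by
  rw [dotProduct, ← (Equiv.ofBijective _ (hyperbolicIndex_bijective hn)).sum_comp,
    Fintype.sum_sum_type, Fintype.sum_sum_type]
  rfl

theorem hammingDist_hyperbolic_affine {F : Type*} [Field F] [Fintype F] [DecidableEq F]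
    (hn : 2 * s ≤ m) (α : Fin m → F) (β : F) :
    hammingDist (fun x => (hyperbolicCoords F hn x).2.1 ⬝ᵥ (hyperbolicCoords F hn x).2.2)
        (fun x => α ⬝ᵥ x + β)
      = Fintype.card F ^ m - #{w : (Fin (m - 2 * s) → F) × (Fin s → F) × (Fin s → F) |
          w.2.1 ⬝ᵥ w.2.2 = (hyperbolicCoords F hn α).1 ⬝ᵥ w.1
            + ((hyperbolicCoords F hn α).2.1 ⬝ᵥ w.2.1 + (hyperbolicCoords F hn α).2.2 ⬝ᵥ w.2.2)
            + β} := by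
  rw [hammingDist_eq_card_sub_card_eq, Fintype.card_fun, Fintype.card_fin]
  congr 1
  exact card_equiv (hyperbolicCoords F hn) fun x => by
    rw [mem_filter_univ, mem_filter_univ, dotProduct_eq_hyperbolicCoords hn]

end HyperbolicCoords

theorem pow_sub_pow_mul_hyperbolic_eq {q m s : ℕ} (hq : 1 ≤ q) (hm : 1 ≤ m) (hn : 2 * s ≤ m) :
    q ^ m - q ^ (m - 2 * s) * ((q ^ s - 1) * q ^ (s - 1) + q ^ s)
      = (q - 1) * q ^ (m - 1) + q ^ (m - s - 1) - q ^ (m - s) := by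
  obtain ⟨p, rfl⟩ : ∃ p, q = p + 1 := ⟨q - 1, by omega⟩
  obtain ⟨r, rfl⟩ : ∃ r, m = 2 * s + r := ⟨m - 2 * s, by omega⟩
  rcases s with _ | t
  · obtain ⟨k, rfl⟩ : ∃ k, r = k + 1 := ⟨r - 1, by omega⟩
    simp only [mul_zero, zero_add, Nat.sub_zero, Nat.add_sub_cancel, pow_zero, Nat.sub_self,
      zero_mul, mul_one, pow_succ]
    ring_nf
    omega
  · rw [show 2 * (t + 1) + r - 2 * (t + 1) = r by omega,
      show 2 * (t + 1) + r - 1 = r + t + (t + 1) by omega,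
      show 2 * (t + 1) + r - (t + 1) - 1 = r + t by omega,
      show 2 * (t + 1) + r - (t + 1) = r + (t + 1) by omega,
      show 2 * (t + 1) + r = r + t + (t + 1) + 1 by omega, Nat.add_sub_cancel, Nat.add_sub_cancel]
    simp only [pow_add, pow_one]
    obtain ⟨a, ha⟩ : ∃ a, (p + 1) ^ t * (p + 1) = a + 1 :=
      ⟨_, (Nat.sub_add_cancel (Nat.one_le_iff_ne_zero.mpr (by positivity))).symm⟩
    rw [ha, Nat.add_sub_cancel]
    ring_nf
    omega

/-- for the hyperbolic quadratic form `q₀(x) = x₁x₂ + ⋯ + x_{r-1}x_r` of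
even rank `r = 2s ≤ m` on `F_q^m`,
`d(q₀, R_q(1,m)) = (q-1)q^{m-1} + q^{m-r/2-1} - q^{m-r/2}`. -/
theorem dist_hyperbolic_to_affine
    {F : Type} [Field F] [Fintype F] [DecidableEq F] {m s : ℕ}
    (hm : 1 ≤ m) (hn : 2 * s ≤ m) (q0 : (Fin m → F) → F)
    (hq0 : ∀ x : Fin m → F, q0 x =
      ∑ i : Fin s, x ⟨2 * i.val, by have := i.isLt; omega⟩ *
        x ⟨2 * i.val + 1, by have := i.isLt; omega⟩) :
    sInf {d : ℕ | ∃ α : Fin m → F, ∃ β : F,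
        d = hammingDist q0 (fun x => (∑ i, α i * x i) + β)} =
      (Fintype.card F - 1) * Fintype.card F ^ (m - 1)
        + Fintype.card F ^ (m - s - 1) - Fintype.card F ^ (m - s) := by
  have hq : q0 = fun x => (hyperbolicCoords F hn x).2.1 ⬝ᵥ (hyperbolicCoords F hn x).2.2 :=
    funext fun x => by rw [hq0, hyperbolicCoords_apply]; rfl
  have least : IsLeast {d : ℕ | ∃ α : Fin m → F, ∃ β : F,
        d = hammingDist q0 (fun x => α ⬝ᵥ x + β)}
      (Fintype.card F ^ m - Fintype.card F ^ Fintype.card (Fin (m - 2 * s))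
        * #{p : (Fin s → F) × (Fin s → F) | p.1 ⬝ᵥ p.2 = 0}) := by
    refine ⟨⟨0, 0, ?_⟩, ?_⟩
    · rw [hq, hammingDist_hyperbolic_affine, ← card_dotProduct_snd_eq_zero]
      simp [show hyperbolicCoords F hn 0 = 0 from rfl]
    · rintro _ ⟨α, β, rfl⟩
      rw [hq, hammingDist_hyperbolic_affine]
      exact Nat.sub_le_sub_left (card_dotProduct_snd_eq_affine_le _ _ _ _) _
  refine least.csInf_eq.trans ?_
  rw [card_pairs_dotProduct_eq, if_pos rfl, Fintype.card_fin, Fintype.card_fin]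
  exact pow_sub_pow_mul_hyperbolic_eq Fintype.card_pos hm hn
end
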